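/- arXiv:1612.05004 — 5 statements merged into one kernel-verified Lean document; each statement's English description precedes it below -/
import Mathlib

section
/- Every connected graph with an even number of vertices contains a perfect forest, i.e., a spanning forest F such that every vertex has odd degree in F and every connected component of F is an induced subgraph of G. -/
open scoped symmDiff
open Finset

private def deg2 {V : Type*} [DecidableEq V] (S : Finset (Sym2 V)) (v : V) : ZMod 2 :=
  (S.filter (fun e => v ∈ e)).card

private lemma card_symmDiff' {α : Type*} [DecidableEq α] (a b : Finset α) :
    (a ∆ b).card + 2 * (a ∩ b).card = a.card + b.card := by
  have h1 : a ∆ b = (a ∪ b) \ (a ∩ b) := by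
    ext x; simp [Finset.mem_symmDiff]; tauto
  have h2 : (a ∩ b) ⊆ (a ∪ b) := (Finset.inter_subset_left).trans Finset.subset_union_left
  have h3 := Finset.card_union_add_card_inter a b
  have h4 := Finset.card_sdiff_of_subset h2
  have h5 := Finset.card_le_card h2
  rw [h1]
  omega

private lemma deg2_symmDiff {V : Type*} [DecidableEq V] (S T : Finset (Sym2 V)) (v : V) :
    deg2 (S ∆ T) v = deg2 S v + deg2 T v := by
  have hf : (S ∆ T).filter (fun e => v ∈ e) =
      (S.filter (fun e => v ∈ e)) ∆ (T.filter (fun e => v ∈ e)) := by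
    ext x; simp [Finset.mem_symmDiff, Finset.mem_filter]; tauto
  unfold deg2
  rw [hf]
  have := card_symmDiff' (S.filter (fun e => v ∈ e)) (T.filter (fun e => v ∈ e))
  have := congrArg (Nat.cast : ℕ → ZMod 2) this
  push_cast at this
  rw [show (2:ZMod 2) = 0 from rfl, zero_mul, add_zero] at this
  rw [this]

private lemma deg2_empty {V : Type*} [DecidableEq V] (v : V) :
    deg2 (∅ : Finset (Sym2 V)) v = 0 := by simp [deg2]

private lemma deg2_singleton {V : Type*} [DecidableEq V] {x y : V} (hxy : x ≠ y) (v : V) :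
    deg2 ({s(x,y)} : Finset (Sym2 V)) v
      = (if v = x then 1 else 0) + (if v = y then 1 else 0) := by
  unfold deg2
  rw [Finset.filter_singleton]
  by_cases hx : v = x <;> by_cases hy : v = y <;>
    simp_all [Sym2.mem_iff]

private lemma deg2_walk {V : Type*} [DecidableEq V] {F : SimpleGraph V} {x y : V}
    (p : F.Walk x y) (hp : p.edges.Nodup) (v : V) :
    deg2 p.edges.toFinset v = (if v = x then 1 else 0) + (if v = y then 1 else 0) := by
  induction p with
  | nil =>
    simp only [SimpleGraph.Walk.edges_nil, List.toFinset_nil, deg2_empty]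
    split <;> decide
  | @cons x w y h q ih =>
    rw [SimpleGraph.Walk.edges_cons, List.nodup_cons] at hp
    obtain ⟨hnm, hnd⟩ := hp
    have hins : (SimpleGraph.Walk.cons h q).edges.toFinset
        = ({s(x,w)} : Finset (Sym2 V)) ∆ q.edges.toFinset := by
      rw [SimpleGraph.Walk.edges_cons, List.toFinset_cons]
      ext z
      simp only [Finset.mem_insert, Finset.mem_symmDiff, Finset.mem_singleton,
        List.mem_toFinset]
      constructor
      · rintro (rfl | hz)
        · exact Or.inl ⟨rfl, by simpa using hnm⟩
        · exact Or.inr ⟨hz, fun hzz => hnm (hzz ▸ hz)⟩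
      · rintro (⟨rfl, -⟩ | ⟨hz, -⟩)
        · exact Or.inl rfl
        · exact Or.inr hz
    rw [hins, deg2_symmDiff, deg2_singleton h.ne, ih hnd]
    have key : ∀ a b c : ZMod 2, (a + b) + (b + c) = a + c := by decide
    exact key _ _ _

private lemma exists_odd_set {V : Type*} [Fintype V] [DecidableEq V] (G : SimpleGraph V)
    (hG : G.Connected) (heven : Even (Fintype.card V)) :
    ∃ S : Finset (Sym2 V), ↑S ⊆ G.edgeSet ∧ ∀ v, deg2 S v = 1 := by
  obtain ⟨v0⟩ := hG.nonempty
  -- for each u, a set with parity χ_u + χ_{v0}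
  have hstep : ∀ u : V, ∃ S : Finset (Sym2 V), ↑S ⊆ G.edgeSet ∧
      ∀ v, deg2 S v = (if v = u then 1 else 0) + (if v = v0 then 1 else 0) := by
    intro u
    obtain ⟨w⟩ := hG.preconnected u v0
    refine ⟨w.bypass.edges.toFinset, ?_, ?_⟩
    · intro e he
      simp only [Finset.coe_sort_coe, Finset.mem_coe, List.mem_toFinset] at he
      exact w.bypass.edges_subset_edgeSet he
    · exact deg2_walk w.bypass w.bypass_isPath.edges_nodup
  have main : ∀ t : Finset V, ∃ S : Finset (Sym2 V), ↑S ⊆ G.edgeSet ∧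
      ∀ v, deg2 S v = ∑ u ∈ t, ((if v = u then (1:ZMod 2) else 0) + (if v = v0 then 1 else 0)) := by
    intro t
    induction t using Finset.induction with
    | empty => exact ⟨∅, by simp, fun v => by simp [deg2_empty]⟩
    | @insert a t ha ih =>
      obtain ⟨S, hSsub, hSdeg⟩ := ih
      obtain ⟨T, hTsub, hTdeg⟩ := hstep a
      refine ⟨T ∆ S, ?_, ?_⟩
      · intro e he
        simp only [Finset.mem_coe, Finset.mem_symmDiff] at he
        rcases he with ⟨h1, -⟩ | ⟨h1, -⟩
        · exact hTsub h1
        · exact hSsub h1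
      · intro v
        rw [deg2_symmDiff, hTdeg, hSdeg, Finset.sum_insert ha]
  obtain ⟨S, hSsub, hSdeg⟩ := main Finset.univ
  refine ⟨S, hSsub, fun v => ?_⟩
  rw [hSdeg v, Finset.sum_add_distrib]
  have h1 : ∑ u : V, (if v = u then (1:ZMod 2) else 0) = 1 := by
    rw [Finset.sum_ite_eq]; simp
  have h2 : ∑ _u : V, (if v = v0 then (1:ZMod 2) else 0) = 0 := by
    rw [Finset.sum_const, nsmul_eq_mul]
    have : ((Fintype.card V : ℕ) : ZMod 2) = 0 := by
      rw [ZMod.natCast_eq_zero_iff]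
      exact heven.two_dvd
    simp [Finset.card_univ, this]
  rw [h1, h2, add_zero]

/-- Perfect Forest Theorem: every connected graph of even order has a spanning forest in
which every vertex has odd degree and every component is an induced subgraph. -/
theorem stmt2 {V : Type*} [Fintype V] (G : SimpleGraph V)
    (hG : G.Connected) (heven : Even (Fintype.card V)) :
    ∃ F : SimpleGraph V, F ≤ G ∧ F.IsAcyclic ∧
      (∀ v : V, Odd ((F.neighborSet v).ncard)) ∧
      (∀ x y : V, G.Adj x y → F.Reachable x y → F.Adj x y) := by
  classical
  obtain ⟨S0, hS0sub, hS0deg⟩ := exists_odd_set G hG heven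
  set P : Finset (Sym2 V) → Prop :=
    fun S => ↑S ⊆ G.edgeSet ∧ ∀ v, deg2 S v = 1 with hP
  set A : Set ℕ := {n | ∃ S, P S ∧ S.card = n} with hA
  have hAne : A.Nonempty := ⟨S0.card, S0, ⟨hS0sub, hS0deg⟩, rfl⟩
  obtain ⟨S, hPS, hcard⟩ := Nat.sInf_mem hAne
  have hmin : ∀ T, P T → S.card ≤ T.card := by
    intro T hT
    have hmem : T.card ∈ A := ⟨T, hT, rfl⟩
    have := Nat.sInf_le hmem
    omega
  obtain ⟨hSsub, hSdeg⟩ := hPS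
  set F := SimpleGraph.fromEdgeSet (↑S : Set (Sym2 V)) with hF
  have hFadj : ∀ {x y : V}, F.Adj x y ↔ s(x,y) ∈ S ∧ x ≠ y := by
    intro x y
    rw [hF, SimpleGraph.fromEdgeSet_adj]
    simp
  have hFle : F ≤ G := by
    intro x y hxy
    rw [hFadj] at hxy
    exact (G.mem_edgeSet).1 (hSsub hxy.1)
  -- key contradiction lemma
  have key : ∀ {x y : V} (p : F.Walk x y), p.IsPath → x ≠ y → s(x,y) ∈ G.edgeSet →
      s(x,y) ∉ p.edges → False := by
    intro x y p hp hxy hedge hne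
    set e := s(x,y) with hedef
    set Pf : Finset (Sym2 V) := p.edges.toFinset with hPf
    have hPfS : Pf ⊆ S := by
      intro f hf
      rw [hPf, List.mem_toFinset] at hf
      have := p.edges_subset_edgeSet hf
      rw [hF, SimpleGraph.edgeSet_fromEdgeSet] at this
      exact this.1
    have hePf : e ∉ Pf := by
      rw [hPf, List.mem_toFinset]; exact hne
    set C : Finset (Sym2 V) := insert e Pf with hC
    have hCsd : C = ({e} : Finset (Sym2 V)) ∆ Pf := by
      ext z
      simp only [hC, Finset.mem_insert, Finset.mem_symmDiff, Finset.mem_singleton]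
      constructor
      · rintro (rfl | hz)
        · exact Or.inl ⟨rfl, hePf⟩
        · exact Or.inr ⟨hz, fun hzz => hePf (hzz ▸ hz)⟩
      · rintro (⟨rfl, -⟩ | ⟨hz, -⟩)
        · exact Or.inl rfl
        · exact Or.inr hz
    have hdegC : ∀ v, deg2 C v = 0 := by
      intro v
      rw [hCsd, deg2_symmDiff, deg2_singleton hxy, deg2_walk p hp.edges_nodup]
      have : ∀ a : ZMod 2, a + a = 0 := by decide
      exact this _
    set S' := S ∆ C with hS'
    have hPS' : P S' := by
      constructor
      · intro f hf
        simp only [hS', Finset.mem_coe, Finset.mem_symmDiff] at hf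
        rcases hf with ⟨h1, -⟩ | ⟨h1, -⟩
        · exact hSsub h1
        · rcases Finset.mem_insert.1 h1 with rfl | h2
          · exact hedge
          · exact hSsub (hPfS h2)
      · intro v
        rw [hS', deg2_symmDiff, hSdeg, hdegC, add_zero]
    have hlt : S'.card < S.card := by
      by_cases heS : e ∈ S
      · have hCS : C ⊆ S := by
          intro f hf
          rcases Finset.mem_insert.1 hf with rfl | h2
          · exact heS
          · exact hPfS h2
        have : S' = S \ C := by
          ext z
          simp only [hS', Finset.mem_symmDiff, Finset.mem_sdiff]
          constructor
          · rintro (⟨h1, h2⟩ | ⟨h1, h2⟩)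
            · exact ⟨h1, h2⟩
            · exact absurd (hCS h1) h2
          · rintro ⟨h1, h2⟩; exact Or.inl ⟨h1, h2⟩
        rw [this, Finset.card_sdiff_of_subset hCS]
        have h1 : 0 < C.card := Finset.card_pos.2 ⟨e, Finset.mem_insert_self _ _⟩
        have h2 : C.card ≤ S.card := Finset.card_le_card hCS
        omega
      · -- e ∉ S; then S' = insert e (S \ Pf) and Pf.card ≥ 2
        have hS'eq : S' = insert e (S \ Pf) := by
          ext z
          simp only [hS', hC, Finset.mem_symmDiff, Finset.mem_insert, Finset.mem_sdiff]
          constructor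
          · rintro (⟨h1, h2⟩ | ⟨h1, h2⟩)
            · refine Or.inr ⟨h1, fun hz => h2 (Or.inr hz)⟩
            · rcases h1 with rfl | h1
              · exact Or.inl rfl
              · exact absurd (hPfS h1) h2
          · rintro (rfl | ⟨h1, h2⟩)
            · exact Or.inr ⟨Or.inl rfl, heS⟩
            · exact Or.inl ⟨h1, fun h => by
                rcases h with rfl | h'
                · exact heS h1
                · exact h2 h'⟩
        have hcardPf : Pf.card = p.length := by
          rw [hPf, List.toFinset_card_of_nodup hp.edges_nodup,
            SimpleGraph.Walk.length_edges]
        have hlen : 2 ≤ p.length := by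
          cases p with
          | nil => exact absurd rfl hxy
          | cons h q =>
            cases q with
            | nil =>
              exact absurd (by simp [hedef]) hne
            | cons h' q' =>
              simp only [SimpleGraph.Walk.length_cons]
              omega
        have henotin : e ∉ S \ Pf := fun h => heS (Finset.mem_sdiff.1 h).1
        rw [hS'eq, Finset.card_insert_of_notMem henotin, Finset.card_sdiff_of_subset hPfS]
        have := Finset.card_le_card hPfS
        omega
    exact absurd (hmin S' hPS') (by omega)
  refine ⟨F, hFle, ?_, ?_, ?_⟩
  · -- acyclic
    intro v c hc
    cases c with
    | nil => simp at hc
    | @cons _ w _ h q =>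
      rw [SimpleGraph.Walk.cons_isCycle_iff] at hc
      obtain ⟨hq, hne⟩ := hc
      refine key q hq h.ne' ?_ ?_
      · rw [Sym2.eq_swap]; exact (G.mem_edgeSet).2 (hFle h)
      · rw [Sym2.eq_swap]; exact hne
  · -- odd degrees
    intro v
    have hset : F.neighborSet v = ↑(Finset.univ.filter (fun w => F.Adj v w)) := by
      ext w; simp [SimpleGraph.neighborSet]
    rw [hset, Set.ncard_coe_finset]
    have hbij : (Finset.univ.filter (fun w => F.Adj v w)).card
        = (S.filter (fun e => v ∈ e)).card := by
      apply Finset.card_bij (fun w _ => s(v, w))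
      · intro w hw
        rw [Finset.mem_filter] at hw ⊢
        rw [hFadj] at hw
        exact ⟨hw.2.1, Sym2.mem_mk_left _ _⟩
      · intro w1 hw1 w2 hw2 heq
        exact Sym2.congr_right.1 heq
      · intro e he
        rw [Finset.mem_filter] at he
        obtain ⟨heS, hve⟩ := he
        obtain ⟨w, rfl⟩ := Sym2.mem_iff_exists.1 hve
        have hne : v ≠ w := by
          intro h
          exact G.not_isDiag_of_mem_edgeSet (hSsub heS) (by simp [h])
        exact ⟨w, Finset.mem_filter.2 ⟨Finset.mem_univ _, hFadj.2 ⟨heS, hne⟩⟩, rfl⟩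
    rw [hbij]
    have := hSdeg v
    unfold deg2 at this
    rcases Nat.even_or_odd (S.filter (fun e => v ∈ e)).card with he | ho
    · exfalso
      rw [(ZMod.natCast_eq_zero_iff _ 2).2 he.two_dvd] at this
      exact absurd this (by decide)
    · exact ho
  · -- induced components
    intro x y hadj hreach
    by_contra hnadj
    obtain ⟨w⟩ := hreach
    refine key w.bypass w.bypass_isPath hadj.ne ((G.mem_edgeSet).2 hadj) ?_
    intro hmem
    have := w.bypass.edges_subset_edgeSet hmem
    rw [hF, SimpleGraph.edgeSet_fromEdgeSet] at this
    exact hnadj (hFadj.2 ⟨this.1, hadj.ne⟩)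
end

section
/- If e is a bridge of a connected graph G with an even number of vertices, and the two components of G − e both have even order, then the union of perfect forests of the two components is a perfect forest of G. -/
/-!
The vertex sets `A` and `B` of the two components of `G - uv` are disjoint and, `G` being
connected, cover `V`. No walk of `F₁ ⊔ F₂` can leave the support of `F₁` or of `F₂`, so every
cycle, component and neighbourhood of `F₁ ⊔ F₂` is one of `F₁` or of `F₂`: the union is an odd
forest whose components are induced in `G - uv`. They stay induced in `G`, because the one extra
edge `uv` joins vertices that are not even connected in `G - uv ≥ F₁ ⊔ F₂`.
-/

/-- `F` is a perfect forest of `G` relative to the vertex set `S`: a forest contained in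
`G`, with all edges inside `S`, all vertices of `S` of odd degree, and each component
induced. -/
def IsPerfectForestOn {V : Type*} (G F : SimpleGraph V) (S : Set V) : Prop :=
  F ≤ G ∧ F.support ⊆ S ∧ F.IsAcyclic ∧
    (∀ v ∈ S, Odd ((F.neighborSet v).ncard)) ∧
    (∀ x ∈ S, ∀ y ∈ S, G.Adj x y → F.Reachable x y → F.Adj x y)

open SimpleGraph

namespace SimpleGraph

variable {V : Type*} {F₁ F₂ : SimpleGraph V} {x y : V}

lemma support_sup : (F₁ ⊔ F₂).support = F₁.support ∪ F₂.support := by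
  ext x
  simp only [mem_support, sup_adj, exists_or, Set.mem_union]

lemma Walk.edges_subset_edgeSet_left_of_disjoint_support (h : Disjoint F₁.support F₂.support)
    (p : (F₁ ⊔ F₂).Walk x y) (hx : x ∉ F₂.support) : ∀ e ∈ p.edges, e ∈ F₁.edgeSet := by
  induction p with
  | nil => simp
  | @cons a c b hac p ih =>
    have h₁ : F₁.Adj a c := hac.resolve_right fun h₂ ↦ hx (F₂.mem_support.2 ⟨c, h₂⟩)
    have hc : c ∉ F₂.support := Set.disjoint_left.1 h (F₁.mem_support.2 ⟨a, h₁.symm⟩)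
    simpa [Walk.edges_cons, h₁] using ih hc

lemma Reachable.left_of_sup_of_disjoint_support (h : Disjoint F₁.support F₂.support)
    (hx : x ∉ F₂.support) (hr : (F₁ ⊔ F₂).Reachable x y) : F₁.Reachable x y :=
  hr.elim fun p ↦ (p.transfer F₁ (p.edges_subset_edgeSet_left_of_disjoint_support h hx)).reachable

lemma IsAcyclic.sup_of_disjoint_support (h₁ : F₁.IsAcyclic) (h₂ : F₂.IsAcyclic)
    (h : Disjoint F₁.support F₂.support) : (F₁ ⊔ F₂).IsAcyclic := by
  intro v c hc
  wlog hv : v ∉ F₂.support generalizing F₁ F₂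
  · have hv₁ : v ∉ F₁.support := Set.disjoint_right.1 h (not_not.1 hv)
    exact this h₂ h₁ h.symm (c.mapLe (sup_comm _ _).le) (hc.mapLe (sup_comm _ _).le) hv₁
  exact h₁ _ (hc.transfer (c.edges_subset_edgeSet_left_of_disjoint_support h hv))

lemma neighborSet_sup_of_notMem_support (hx : x ∉ F₂.support) :
    (F₁ ⊔ F₂).neighborSet x = F₁.neighborSet x := by
  have : F₂.neighborSet x = ∅ :=
    Set.eq_empty_of_forall_notMem fun y hy ↦ hx (F₂.mem_support.2 ⟨y, hy⟩)
  rw [neighborSet_sup, this, Set.union_empty]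

lemma Reachable.deleteEdges_singleton_or {G : SimpleGraph V} {u v : V} (h : G.Reachable u x) :
    (G.deleteEdges {s(u, v)}).Reachable u x ∨ (G.deleteEdges {s(u, v)}).Reachable v x := by
  rw [reachable_iff_reflTransGen] at h
  induction h with
  | refl => exact .inl .rfl
  | @tail a c _ hac ih =>
    by_cases he : s(a, c) = s(u, v)
    · rcases Sym2.eq_iff.1 he with ⟨-, rfl⟩ | ⟨-, rfl⟩
      exacts [.inr .rfl, .inl .rfl]
    · have hac' : (G.deleteEdges {s(u, v)}).Adj a c := deleteEdges_adj.2 ⟨hac, he⟩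
      exact ih.imp (·.trans hac'.reachable) (·.trans hac'.reachable)

end SimpleGraph

namespace IsPerfectForestOn

variable {V : Type*} {H F₁ F₂ : SimpleGraph V} {A B : Set V} {x y : V}

lemma notMem_support_of_disjoint (h : IsPerfectForestOn H F₂ B) (hAB : Disjoint A B)
    (hx : x ∈ A) : x ∉ F₂.support :=
  fun hx₂ ↦ Set.disjoint_left.1 hAB hx (h.2.1 hx₂)

lemma odd_ncard_neighborSet_sup (h₁ : IsPerfectForestOn H F₁ A)
    (h₂ : IsPerfectForestOn H F₂ B) (hAB : Disjoint A B) (hx : x ∈ A) :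
    Odd ((F₁ ⊔ F₂).neighborSet x).ncard := by
  rw [neighborSet_sup_of_notMem_support (h₂.notMem_support_of_disjoint hAB hx)]
  exact h₁.2.2.2.1 x hx

lemma adj_sup_of_reachable (h₁ : IsPerfectForestOn H F₁ A) (h₂ : IsPerfectForestOn H F₂ B)
    (hAB : Disjoint A B) (hx : x ∈ A) (hxy : H.Adj x y) (hr : (F₁ ⊔ F₂).Reachable x y) :
    (F₁ ⊔ F₂).Adj x y := by
  obtain ⟨-, hsupp₁, -, -, hind₁⟩ := h₁
  have hr₁ : F₁.Reachable x y := hr.left_of_sup_of_disjoint_support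
    (hAB.mono hsupp₁ h₂.2.1) (h₂.notMem_support_of_disjoint hAB hx)
  have hy : y ∈ A := hsupp₁ (mem_support_of_reachable hxy.ne.symm hr₁.symm)
  exact .inl (hind₁ x hx y hy hxy hr₁)

theorem sup (h₁ : IsPerfectForestOn H F₁ A) (h₂ : IsPerfectForestOn H F₂ B)
    (hAB : Disjoint A B) : IsPerfectForestOn H (F₁ ⊔ F₂) (A ∪ B) := by
  refine ⟨sup_le h₁.1 h₂.1, support_sup ▸ Set.union_subset_union h₁.2.1 h₂.2.1,
    h₁.2.2.1.sup_of_disjoint_support h₂.2.2.1 (hAB.mono h₁.2.1 h₂.2.1), ?_, ?_⟩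
  · rintro x (hx | hx)
    · exact h₁.odd_ncard_neighborSet_sup h₂ hAB hx
    · rw [sup_comm]
      exact h₂.odd_ncard_neighborSet_sup h₁ hAB.symm hx
  · rintro x (hx | hx) y - hxy hr
    · exact h₁.adj_sup_of_reachable h₂ hAB hx hxy hr
    · rw [sup_comm] at hr ⊢
      exact h₂.adj_sup_of_reachable h₁ hAB.symm hx hxy hr

theorem of_isBridge {G F : SimpleGraph V} {S : Set V} {u v : V} (hb : G.IsBridge s(u, v))
    (hF : IsPerfectForestOn (G.deleteEdges {s(u, v)}) F S) : IsPerfectForestOn G F S := by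
  obtain ⟨hle, hsupp, hac, hodd, hind⟩ := hF
  have huv : ¬F.Reachable u v := fun h ↦ isBridge_iff.1 hb (h.mono hle)
  refine ⟨hle.trans (deleteEdges_le _), hsupp, hac, hodd,
    fun x hx y hy hxy hr ↦ hind x hx y hy (deleteEdges_adj.2 ⟨hxy, ?_⟩) hr⟩
  rintro (he : s(x, y) = s(u, v))
  rcases Sym2.eq_iff.1 he with ⟨rfl, rfl⟩ | ⟨rfl, rfl⟩
  exacts [huv hr, huv hr.symm]

end IsPerfectForestOn

theorem stmt5_general {V : Type*} (G : SimpleGraph V)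
    (hG : G.Connected)
    (u v : V) (hbridge : G.IsBridge s(u, v))
    (F₁ F₂ : SimpleGraph V)
    (hF₁ : IsPerfectForestOn (G.deleteEdges {s(u, v)}) F₁
      {x : V | (G.deleteEdges {s(u, v)}).Reachable u x})
    (hF₂ : IsPerfectForestOn (G.deleteEdges {s(u, v)}) F₂
      {x : V | (G.deleteEdges {s(u, v)}).Reachable v x}) :
    IsPerfectForestOn G (F₁ ⊔ F₂) Set.univ := by
  have hdisj : Disjoint {x : V | (G.deleteEdges {s(u, v)}).Reachable u x}
      {x : V | (G.deleteEdges {s(u, v)}).Reachable v x} :=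
    Set.disjoint_left.2 fun _ hu hv ↦ isBridge_iff.1 hbridge (hu.trans hv.symm)
  have hcover : {x : V | (G.deleteEdges {s(u, v)}).Reachable u x} ∪
      {x : V | (G.deleteEdges {s(u, v)}).Reachable v x} = Set.univ :=
    Set.eq_univ_of_forall fun x ↦ (hG.preconnected u x).deleteEdges_singleton_or
  rw [← hcover]
  exact (hF₁.sup hF₂ hdisj).of_isBridge hbridge

/-- If e is a bridge of a connected graph G of even order whose deletion leaves two
components of even order, then the union of perfect forests of the two components is a
perfect forest of G. -/
theorem stmt5 {V : Type*} [Fintype V] (G : SimpleGraph V)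
    (hG : G.Connected) (heven : Even (Fintype.card V))
    (u v : V) (huv : G.Adj u v) (hbridge : G.IsBridge s(u, v))
    (hA : Even {x : V | (G.deleteEdges {s(u, v)}).Reachable u x}.ncard)
    (hB : Even {x : V | (G.deleteEdges {s(u, v)}).Reachable v x}.ncard)
    (F₁ F₂ : SimpleGraph V)
    (hF₁ : IsPerfectForestOn (G.deleteEdges {s(u, v)}) F₁
      {x : V | (G.deleteEdges {s(u, v)}).Reachable u x})
    (hF₂ : IsPerfectForestOn (G.deleteEdges {s(u, v)}) F₂
      {x : V | (G.deleteEdges {s(u, v)}).Reachable v x}) :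
    IsPerfectForestOn G (F₁ ⊔ F₂) Set.univ :=
  stmt5_general G hG u v hbridge F₁ F₂ hF₁ hF₂
end

section
/- Let e = uv be a bridge of a connected graph G of even order whose removal yields components G₁ (containing u) and G₂ (containing v), both of odd order. If F₁ is a perfect forest of G₁ + e (the subgraph induced by V(G₁) ∪ {v}) and F₂ is a perfect forest of G₂ + e (the subgraph induced by V(G₂) ∪ {u}), then F₁ ∪ F₂ is a perfect forest of G. -/
theorem Set.odd_ncard_union_of_inter_eq_singleton {α : Type*} {s t : Set α} {a : α}
    (hs : Odd s.ncard) (ht : Odd t.ncard) (hst : s ∩ t = {a}) : Odd (s ∪ t).ncard := by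
  have hcard := Set.ncard_union_add_ncard_inter s t
    (Set.finite_of_ncard_ne_zero hs.pos.ne') (Set.finite_of_ncard_ne_zero ht.pos.ne')
  rw [hst, Set.ncard_singleton] at hcard
  rw [Nat.odd_iff] at hs ht ⊢
  omega

namespace SimpleGraph

variable {V : Type*}

theorem Reachable.map_of_forall_adj {W : Type*} {F : SimpleGraph V} {K : SimpleGraph W}
    (f : V → W) (hf : ∀ x y, F.Adj x y → K.Reachable (f x) (f y)) {x y : V}
    (h : F.Reachable x y) : K.Reachable (f x) (f y) := by
  rw [reachable_iff_reflTransGen] at h ⊢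
  exact Relation.ReflTransGen.lift' f
    (fun a b hab => (reachable_iff_reflTransGen _ _).1 (hf a b hab)) x y h

theorem Reachable.mem_iff_of_forall_adj {F : SimpleGraph V} {S : Set V}
    (hS : ∀ x y, F.Adj x y → (x ∈ S ↔ y ∈ S)) {x y : V} (h : F.Reachable x y) :
    x ∈ S ↔ y ∈ S := by
  simpa [reachable_bot] using
    h.map_of_forall_adj (K := ⊥) (· ∈ S) fun a b hab => reachable_bot.2 (propext (hS a b hab))

structure IsGluedAlongEdge (F₁ F₂ : SimpleGraph V) (A B : Set V) (u v : V) : Prop where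
  disjoint : Disjoint A B
  left_mem : u ∈ A
  right_mem : v ∈ B
  adj_left : ∀ x y, F₁.Adj x y → x ∈ A ∧ y ∈ A ∨ s(x, y) = s(u, v)
  adj_right : ∀ x y, F₂.Adj x y → x ∈ B ∧ y ∈ B ∨ s(x, y) = s(u, v)

namespace IsGluedAlongEdge

variable {F₁ F₂ : SimpleGraph V} {A B : Set V} {u v : V}

theorem symm (hg : IsGluedAlongEdge F₁ F₂ A B u v) : IsGluedAlongEdge F₂ F₁ B A v u where
  disjoint := hg.disjoint.symm
  left_mem := hg.right_mem
  right_mem := hg.left_mem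
  adj_left x y h := Sym2.eq_swap (a := u) ▸ hg.adj_right x y h
  adj_right x y h := Sym2.eq_swap (a := u) ▸ hg.adj_left x y h

theorem mono {F₁' F₂' : SimpleGraph V} (hg : IsGluedAlongEdge F₁ F₂ A B u v) (h₁ : F₁' ≤ F₁)
    (h₂ : F₂' ≤ F₂) : IsGluedAlongEdge F₁' F₂' A B u v :=
  { hg with
    adj_left := fun x y h => hg.adj_left x y (h₁ h)
    adj_right := fun x y h => hg.adj_right x y (h₂ h) }

theorem right_notMem_left (hg : IsGluedAlongEdge F₁ F₂ A B u v) : v ∉ A :=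
  hg.disjoint.notMem_of_mem_right hg.right_mem

theorem ne (hg : IsGluedAlongEdge F₁ F₂ A B u v) : u ≠ v :=
  fun h => hg.right_notMem_left (h ▸ hg.left_mem)

theorem adj_of_odd_ncard_neighborSet (hg : IsGluedAlongEdge F₁ F₂ A B u v)
    (hv : Odd (F₁.neighborSet v).ncard) : F₁.Adj u v := by
  obtain ⟨z, hz⟩ := Set.nonempty_of_ncard_ne_zero hv.pos.ne'
  rcases hg.adj_left v z hz with ⟨hvA, -⟩ | h
  · exact absurd hvA hg.right_notMem_left
  · rcases Sym2.eq_iff.1 h with ⟨rfl, -⟩ | ⟨-, rfl⟩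
    · exact absurd rfl hg.ne
    · exact hz.symm

/-- Collapsing everything outside `A` onto `v` turns walks of `F₁ ⊔ F₂` into walks of `F₁`. -/
theorem reachable_left_of_reachable_sup (hg : IsGluedAlongEdge F₁ F₂ A B u v)
    (huv : F₁.Adj u v) {x y : V} (hx : x ∈ A) (hy : y ∈ A) (h : (F₁ ⊔ F₂).Reachable x y) :
    F₁.Reachable x y := by
  classical
  let r : V → V := fun z => if z ∈ A then z else v
  have hr : ∀ a b, (F₁ ⊔ F₂).Adj a b → F₁.Reachable (r a) (r b) := by
    intro a b hab
    have hvA := hg.right_notMem_left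
    have hB : ∀ z ∈ B, r z = v := fun z hz => if_neg (hg.disjoint.notMem_of_mem_right hz)
    have huv_r : ∀ a b, s(a, b) = s(u, v) → F₁.Reachable (r a) (r b) := by
      intro a b h
      rcases Sym2.eq_iff.1 h with ⟨rfl, rfl⟩ | ⟨rfl, rfl⟩
      · simpa [r, hg.left_mem, hvA] using huv.reachable
      · simpa [r, hg.left_mem, hvA] using huv.reachable.symm
    rcases hab with hab | hab
    · rcases hg.adj_left a b hab with ⟨ha, hb⟩ | h
      · simpa [r, ha, hb] using hab.reachable
      · exact huv_r a b h
    · rcases hg.adj_right a b hab with ⟨ha, hb⟩ | h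
      · rw [hB a ha, hB b hb]
      · exact huv_r a b h
  simpa [r, hx, hy] using h.map_of_forall_adj r hr

theorem not_reachable_deleteEdges_sup (hg : IsGluedAlongEdge F₁ F₂ A B u v) :
    ¬((F₁ ⊔ F₂).deleteEdges {s(u, v)}).Reachable u v := by
  intro h
  refine hg.right_notMem_left ((h.mem_iff_of_forall_adj fun a b hab => ?_).1 hg.left_mem)
  simp only [deleteEdges_adj, Set.mem_singleton_iff, sup_adj] at hab
  obtain ⟨hab | hab, hne⟩ := hab
  · rcases hg.adj_left a b hab with ⟨ha, hb⟩ | h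
    · exact iff_of_true ha hb
    · exact absurd h hne
  · rcases hg.adj_right a b hab with ⟨ha, hb⟩ | h
    · exact iff_of_false (hg.disjoint.notMem_of_mem_right ha)
        (hg.disjoint.notMem_of_mem_right hb)
    · exact absurd h hne

theorem isBridge_sup_of_adj_left (hg : IsGluedAlongEdge F₁ F₂ A B u v) (hF₁ : F₁.IsAcyclic)
    (huv : F₁.Adj u v) {x y : V} (hxy : F₁.Adj x y) : (F₁ ⊔ F₂).IsBridge s(x, y) := by
  rcases hg.adj_left x y hxy with ⟨hx, hy⟩ | h
  · rw [isBridge_iff, deleteEdges_sup]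
    intro hr
    have hne : s(u, v) ≠ s(x, y) := fun h => by
      rcases Sym2.mem_iff.1 (h ▸ Sym2.mem_mk_right u v) with rfl | rfl
      exacts [hg.right_notMem_left hx, hg.right_notMem_left hy]
    have huv' : (F₁.deleteEdges {s(x, y)}).Adj u v := (deleteEdges_adj ..).2 ⟨huv, hne⟩
    exact isAcyclic_iff_forall_adj_isBridge.1 hF₁ hxy
      ((hg.mono (deleteEdges_le _) (deleteEdges_le _)).reachable_left_of_reachable_sup
        huv' hx hy hr)
  · rw [h, isBridge_iff]
    exact hg.not_reachable_deleteEdges_sup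

theorem isAcyclic_sup (hg : IsGluedAlongEdge F₁ F₂ A B u v) (hF₁ : F₁.IsAcyclic)
    (hF₂ : F₂.IsAcyclic) (huv₁ : F₁.Adj u v) (huv₂ : F₂.Adj v u) : (F₁ ⊔ F₂).IsAcyclic := by
  refine isAcyclic_iff_forall_adj_isBridge.2 fun x y hxy => hxy.elim
    (hg.isBridge_sup_of_adj_left hF₁ huv₁) fun h => ?_
  simpa only [sup_comm] using hg.symm.isBridge_sup_of_adj_left hF₂ huv₂ h

theorem odd_ncard_neighborSet_sup_of_mem_left (hg : IsGluedAlongEdge F₁ F₂ A B u v)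
    (huv₁ : F₁.Adj u v) (huv₂ : F₂.Adj v u) (hu : Odd (F₂.neighborSet u).ncard) {w : V}
    (hw : w ∈ A) (hw₁ : Odd (F₁.neighborSet w).ncard) :
    Odd ((F₁ ⊔ F₂).neighborSet w).ncard := by
  rw [neighborSet_sup]
  by_cases hwu : w = u
  · subst hwu
    refine Set.odd_ncard_union_of_inter_eq_singleton hw₁ hu (a := v) ?_
    ext z
    refine ⟨fun ⟨_, hz⟩ => ?_, fun hz => hz ▸ ⟨huv₁, huv₂.symm⟩⟩
    rcases hg.adj_right w z hz with ⟨hwB, -⟩ | h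
    · exact absurd hwB (hg.disjoint.notMem_of_mem_left hw)
    · rcases Sym2.eq_iff.1 h with ⟨-, rfl⟩ | ⟨rfl, -⟩
      · rfl
      · exact absurd rfl hg.ne
  · suffices F₂.neighborSet w = ∅ by rwa [this, Set.union_empty]
    refine Set.eq_empty_of_forall_notMem fun z hz => ?_
    rcases hg.adj_right w z hz with ⟨hwB, -⟩ | h
    · exact hg.disjoint.notMem_of_mem_left hw hwB
    · rcases Sym2.eq_iff.1 h with ⟨rfl, -⟩ | ⟨rfl, -⟩
      · exact hwu rfl
      · exact hg.right_notMem_left hw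

end IsGluedAlongEdge

section DeleteBridge

variable {G : SimpleGraph V} {u v : V}

theorem IsBridge.disjoint_reachable_deleteEdges (h : G.IsBridge s(u, v)) :
    Disjoint {x | (G.deleteEdges {s(u, v)}).Reachable u x}
      {x | (G.deleteEdges {s(u, v)}).Reachable v x} :=
  Set.disjoint_left.2 fun _ hu hv => isBridge_iff.1 h (hu.trans hv.symm)

theorem Connected.reachable_deleteEdges_or (hG : G.Connected) (x : V) :
    (G.deleteEdges {s(u, v)}).Reachable u x ∨ (G.deleteEdges {s(u, v)}).Reachable v x := by
  refine ((hG.preconnected u x).mem_iff_of_forall_adj (S := {z |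
    (G.deleteEdges {s(u, v)}).Reachable u z ∨ (G.deleteEdges {s(u, v)}).Reachable v z})
    fun a b hab => ?_).1 (Or.inl Reachable.rfl)
  by_cases h : s(a, b) = s(u, v)
  · have hend : ∀ z ∈ s(u, v), (G.deleteEdges {s(u, v)}).Reachable u z ∨
        (G.deleteEdges {s(u, v)}).Reachable v z := by
      simp only [Sym2.mem_iff]
      rintro z (rfl | rfl)
      exacts [Or.inl .rfl, Or.inr .rfl]
    exact iff_of_true (hend a (h ▸ Sym2.mem_mk_left a b)) (hend b (h ▸ Sym2.mem_mk_right a b))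
  · have hab' : (G.deleteEdges {s(u, v)}).Reachable a b :=
      ((deleteEdges_adj ..).2 ⟨hab, h⟩).reachable
    exact or_congr ⟨(·.trans hab'), (·.trans hab'.symm)⟩ ⟨(·.trans hab'), (·.trans hab'.symm)⟩

theorem Connected.reachable_deleteEdges_or_of_adj (hG : G.Connected) {x y : V}
    (hxy : G.Adj x y) :
    (G.deleteEdges {s(u, v)}).Reachable u x ∧ (G.deleteEdges {s(u, v)}).Reachable u y ∨
      (G.deleteEdges {s(u, v)}).Reachable v x ∧ (G.deleteEdges {s(u, v)}).Reachable v y ∨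
      s(x, y) = s(u, v) := by
  by_cases h : s(x, y) = s(u, v)
  · exact Or.inr (Or.inr h)
  · have hxy' : (G.deleteEdges {s(u, v)}).Reachable x y :=
      ((deleteEdges_adj ..).2 ⟨hxy, h⟩).reachable
    rcases hG.reachable_deleteEdges_or x with hx | hx
    exacts [Or.inl ⟨hx, hx.trans hxy'⟩, Or.inr (Or.inl ⟨hx, hx.trans hxy'⟩)]

end DeleteBridge

end SimpleGraph

open SimpleGraph

namespace IsPerfectForestOn

variable {V : Type*}

theorem adj_mem_or_eq {G F : SimpleGraph V} {A B : Set V} {u v : V}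
    (hF : IsPerfectForestOn G F (A ∪ {v})) (hAB : Disjoint A B)
    (hG : ∀ x y, G.Adj x y → x ∈ A ∧ y ∈ A ∨ x ∈ B ∧ y ∈ B ∨ s(x, y) = s(u, v))
    (x y : V) (hxy : F.Adj x y) : x ∈ A ∧ y ∈ A ∨ s(x, y) = s(u, v) := by
  have hB : ∀ z ∈ A ∪ {v}, z ∈ B → z = v := fun z hz hzB =>
    hz.resolve_left (hAB.notMem_of_mem_right hzB)
  rcases hG x y (hF.1 hxy) with hA | ⟨hx, hy⟩ | h
  · exact Or.inl hA
  · have hx' := hB x (hF.2.1 ⟨y, hxy⟩) hx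
    have hy' := hB y (hF.2.1 ⟨x, hxy.symm⟩) hy
    exact (hx' ▸ hy' ▸ hxy).ne rfl |>.elim
  · exact Or.inr h

theorem sup_s6 {G F₁ F₂ : SimpleGraph V} {A B : Set V} {u v : V}
    (hAB : Disjoint A B) (hu : u ∈ A) (hv : v ∈ B) (hcover : ∀ x, x ∈ A ∨ x ∈ B)
    (hG : ∀ x y, G.Adj x y → x ∈ A ∧ y ∈ A ∨ x ∈ B ∧ y ∈ B ∨ s(x, y) = s(u, v))
    (hF₁ : IsPerfectForestOn G F₁ (A ∪ {v})) (hF₂ : IsPerfectForestOn G F₂ (B ∪ {u})) :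
    IsPerfectForestOn G (F₁ ⊔ F₂) Set.univ := by
  have hG' : ∀ x y, G.Adj x y → x ∈ B ∧ y ∈ B ∨ x ∈ A ∧ y ∈ A ∨ s(x, y) = s(v, u) :=
    fun x y hxy => Sym2.eq_swap (a := u) ▸ or_left_comm.1 (hG x y hxy)
  have hg : IsGluedAlongEdge F₁ F₂ A B u v :=
    ⟨hAB, hu, hv, hF₁.adj_mem_or_eq hAB hG, fun x y h =>
      Sym2.eq_swap (a := v) ▸ hF₂.adj_mem_or_eq hAB.symm hG' x y h⟩
  obtain ⟨hle₁, -, hacyc₁, hodd₁, hind₁⟩ := hF₁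
  obtain ⟨hle₂, -, hacyc₂, hodd₂, hind₂⟩ := hF₂
  have huv₁ := hg.adj_of_odd_ncard_neighborSet (hodd₁ v (Or.inr rfl))
  have huv₂ := hg.symm.adj_of_odd_ncard_neighborSet (hodd₂ u (Or.inr rfl))
  refine ⟨sup_le hle₁ hle₂, Set.subset_univ _, hg.isAcyclic_sup hacyc₁ hacyc₂ huv₁ huv₂,
    fun w _ => ?_, fun x _ y _ hxy hr => ?_⟩
  · rcases hcover w with hw | hw
    · exact hg.odd_ncard_neighborSet_sup_of_mem_left huv₁ huv₂ (hodd₂ u (Or.inr rfl)) hw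
        (hodd₁ w (Or.inl hw))
    · rw [sup_comm]
      exact hg.symm.odd_ncard_neighborSet_sup_of_mem_left huv₂ huv₁ (hodd₁ v (Or.inr rfl)) hw
        (hodd₂ w (Or.inl hw))
  · rcases hG x y hxy with ⟨hx, hy⟩ | ⟨hx, hy⟩ | h
    · exact Or.inl (hind₁ x (Or.inl hx) y (Or.inl hy) hxy
        (hg.reachable_left_of_reachable_sup huv₁ hx hy hr))
    · exact Or.inr (hind₂ x (Or.inl hx) y (Or.inl hy) hxy
        (hg.symm.reachable_left_of_reachable_sup huv₂ hx hy (sup_comm F₁ F₂ ▸ hr)))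
    · rw [← mem_edgeSet, h]
      exact Or.inl huv₁

end IsPerfectForestOn

theorem stmt6_general {V : Type*} (G : SimpleGraph V)
    (hG : G.Connected)
    (u v : V) (hbridge : G.IsBridge s(u, v))
    (F₁ F₂ : SimpleGraph V)
    (hF₁ : IsPerfectForestOn G F₁
      ({x : V | (G.deleteEdges {s(u, v)}).Reachable u x} ∪ {v}))
    (hF₂ : IsPerfectForestOn G F₂
      ({x : V | (G.deleteEdges {s(u, v)}).Reachable v x} ∪ {u})) :
    IsPerfectForestOn G (F₁ ⊔ F₂) Set.univ :=
  IsPerfectForestOn.sup_s6 hbridge.disjoint_reachable_deleteEdges .rfl .rfl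
    hG.reachable_deleteEdges_or (fun _ _ => hG.reachable_deleteEdges_or_of_adj) hF₁ hF₂

/-- If e = uv is a bridge of a connected graph G of even order whose deletion leaves two
components G₁ ∋ u and G₂ ∋ v of odd order, and F₁, F₂ are perfect forests of G₁ + e
(induced on V(G₁) ∪ {v}) and G₂ + e (induced on V(G₂) ∪ {u}), then F₁ ∪ F₂ is a perfect
forest of G. -/
theorem stmt6 {V : Type*} [Fintype V] (G : SimpleGraph V)
    (hG : G.Connected) (heven : Even (Fintype.card V))
    (u v : V) (huv : G.Adj u v) (hbridge : G.IsBridge s(u, v))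
    (hA : Odd {x : V | (G.deleteEdges {s(u, v)}).Reachable u x}.ncard)
    (hB : Odd {x : V | (G.deleteEdges {s(u, v)}).Reachable v x}.ncard)
    (F₁ F₂ : SimpleGraph V)
    (hF₁ : IsPerfectForestOn G F₁
      ({x : V | (G.deleteEdges {s(u, v)}).Reachable u x} ∪ {v}))
    (hF₂ : IsPerfectForestOn G F₂
      ({x : V | (G.deleteEdges {s(u, v)}).Reachable v x} ∪ {u})) :
    IsPerfectForestOn G (F₁ ⊔ F₂) Set.univ :=
  stmt6_general G hG u v hbridge F₁ F₂ hF₁ hF₂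
end

section
/- If F is a perfect forest of G − e and the endpoints of e lie in different components of F, then F is also a perfect forest of G. -/
/-- `F` is a perfect forest of `G`: a spanning forest, all degrees odd, every component
an induced subgraph of `G`. -/
def IsPerfectForest {V : Type*} (G F : SimpleGraph V) : Prop :=
  F ≤ G ∧ F.IsAcyclic ∧ (∀ v : V, Odd ((F.neighborSet v).ncard)) ∧
    (∀ x y : V, G.Adj x y → F.Reachable x y → F.Adj x y)

/-- If F is a perfect forest of G − e and the endpoints of e lie in different components
of F, then F is a perfect forest of G. -/
theorem stmt7 {V : Type*} [Fintype V] (G : SimpleGraph V)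
    (u v : V) (huv : G.Adj u v) (F : SimpleGraph V)
    (hF : IsPerfectForest (G.deleteEdges {s(u, v)}) F)
    (hsep : ¬ F.Reachable u v) :
    IsPerfectForest G F := by
  obtain ⟨hle, hacy, hodd, hind⟩ := hF
  refine ⟨hle.trans (SimpleGraph.deleteEdges_le _), hacy, hodd, ?_⟩
  intro x y hxy hreach
  by_cases h : s(x, y) = s(u, v)
  · rw [Sym2.eq_iff] at h
    rcases h with ⟨hx, hy⟩ | ⟨hx, hy⟩
    · exact absurd (hx ▸ hy ▸ hreach) hsep
    · exact absurd (hx ▸ hy ▸ hreach.symm) hsep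
  · exact hind x y (by simp [SimpleGraph.deleteEdges_adj, hxy, h]) hreach
end

section
/- If T is a spanning tree of a connected non-tree graph G in which every vertex has odd degree, and e = uv ∈ E(G) \ E(T), and w is the neighbour of u on the path in T from u to v, then T − uw + e is a spanning tree of G with exactly two vertices of even degree, namely v and w. -/
/-!
The tree edge `uw` is a bridge, while the rest of the tree path from `u` to `v` joins `w` to `v`
avoiding `uw`. Hence `u` and `v` lie in different components of `T - uw`, and adding `uv` joins
them again without closing a cycle. The exchange raises the degree of `v` by one, lowers that of
`w` by one and leaves all other degrees alone (`u` trades `w` for `v`), so exactly `v` and `w`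
turn from odd to even degree.
-/

open SimpleGraph

namespace SimpleGraph

variable {V : Type*} {G G' : SimpleGraph V} {a b u v w x : V}

theorem Reachable.of_forall_adj_reachable (h : ∀ ⦃c d⦄, G.Adj c d → G'.Reachable c d)
    (hab : G.Reachable a b) : G'.Reachable a b := by
  rw [reachable_iff_reflTransGen] at hab ⊢
  exact hab.lift' id fun c d hcd ↦ (reachable_iff_reflTransGen c d).mp (h hcd)

theorem Connected.of_deleteEdges_le (hG : G.Connected) (hle : G.deleteEdges {s(a, b)} ≤ G')
    (hab : G'.Reachable a b) : G'.Connected := by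
  have := hG.nonempty
  refine ⟨fun x y ↦ (hG.preconnected x y).of_forall_adj_reachable fun c d hcd ↦ ?_⟩
  by_cases hcd' : s(c, d) = s(a, b)
  · rcases Sym2.eq_iff.mp hcd' with ⟨rfl, rfl⟩ | ⟨rfl, rfl⟩
    exacts [hab, hab.symm]
  · exact (hle (deleteEdges_adj.mpr ⟨hcd, hcd'⟩)).reachable

theorem IsTree.deleteEdges_sup_edge {T : SimpleGraph V} (hT : T.IsTree) (huw : T.Adj u w)
    (hwv : (T.deleteEdges {s(u, w)}).Reachable w v) :
    (T.deleteEdges {s(u, w)} ⊔ edge u v).IsTree := by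
  have hnreach : ¬(T.deleteEdges {s(u, w)}).Reachable u v := fun h ↦
    isBridge_iff.mp (isAcyclic_iff_forall_adj_isBridge.mp hT.isAcyclic huw) (h.trans hwv.symm)
  have huv : (edge u v).Adj u v :=
    (edge_adj ..).mpr ⟨.inl ⟨rfl, rfl⟩, fun h ↦ hnreach (h ▸ .rfl)⟩
  refine ⟨hT.connected.of_deleteEdges_le le_sup_left ?_,
    (hT.isAcyclic.anti (deleteEdges_le _)).sup_edge_of_not_reachable hnreach⟩
  exact (le_sup_right (a := T.deleteEdges _) huv).reachable.trans (hwv.mono le_sup_left).symm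

theorem Walk.IsPath.reachable_deleteEdges_snd {p : G.Walk u v} (hp : p.IsPath) :
    (G.deleteEdges {s(u, p.snd)}).Reachable p.snd v := by
  cases p with
  | nil => rfl
  | cons h q =>
    rw [Walk.snd_cons]
    exact reachable_deleteEdges_iff_exists_walk.mpr
      ⟨q, fun hq ↦ ((Walk.cons_isPath_iff h q).mp hp).2 (q.fst_mem_support_of_mem_edges hq)⟩

theorem ncard_neighborSet_edge [DecidableEq V] (huv : u ≠ v) (x : V) :
    ((edge u v).neighborSet x).ncard = if x = u ∨ x = v then 1 else 0 := by
  split_ifs with hx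
  · rcases hx with rfl | rfl
    · rw [show (edge x v).neighborSet x = {v} by ext; simp [edge_adj]; grind, Set.ncard_singleton]
    · rw [show (edge u x).neighborSet x = {u} by ext; simp [edge_adj]; grind, Set.ncard_singleton]
  · rw [show (edge u v).neighborSet x = ∅ by ext; simp [edge_adj]; grind, Set.ncard_empty]

theorem ncard_neighborSet_sup_edge [DecidableEq V] (hn : ¬G.Adj u v) (huv : u ≠ v)
    (hx : (G.neighborSet x).Finite) :
    ((G ⊔ edge u v).neighborSet x).ncard =
      (G.neighborSet x).ncard + if x = u ∨ x = v then 1 else 0 := by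
  have hfin : ((edge u v).neighborSet x).Finite :=
    (Set.toFinite {u, v}).subset fun y hy ↦ by simp [edge_adj] at hy; grind
  have hdisj := disjoint_neighborSet.mpr ((disjoint_edge G).mpr hn) x
  rw [neighborSet_sup, Set.ncard_union_eq hdisj hx hfin, ncard_neighborSet_edge huv]

theorem ncard_neighborSet_deleteEdges_add [DecidableEq V] (huw : G.Adj u w)
    (hx : (G.neighborSet x).Finite) :
    ((G.deleteEdges {s(u, w)}).neighborSet x).ncard + (if x = u ∨ x = w then 1 else 0) =
      (G.neighborSet x).ncard := by
  rw [← ncard_neighborSet_edge huw.ne]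
  -- `G.deleteEdges {s(u, w)}` is `G \ edge u w` by definition.
  exact Set.ncard_sdiff_add_ncard_of_subset (neighborSet_mono ((edge_le_iff G).mpr (.inr huw)) x) hx

theorem ncard_neighborSet_deleteEdges_sup_edge_add [DecidableEq V] (huw : G.Adj u w)
    (hn : ¬G.Adj u v) (huv : u ≠ v) (hx : (G.neighborSet x).Finite) :
    ((G.deleteEdges {s(u, w)} ⊔ edge u v).neighborSet x).ncard +
        (if x = u ∨ x = w then 1 else 0) =
      (G.neighborSet x).ncard + if x = u ∨ x = v then 1 else 0 := by
  have hx' := hx.subset (neighborSet_mono (deleteEdges_le {s(u, w)}) x)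
  rw [ncard_neighborSet_sup_edge (fun h ↦ hn (deleteEdges_le _ h)) huv hx',
    ← ncard_neighborSet_deleteEdges_add huw hx]
  ring

end SimpleGraph

theorem stmt15_general {V : Type*} (G : SimpleGraph V)
    (T : SimpleGraph V) (hTG : T ≤ G) (hT : T.IsTree)
    (hodd : ∀ x : V, Odd ((T.neighborSet x).ncard))
    (u v : V) (huv : G.Adj u v) (he : s(u, v) ∉ T.edgeSet)
    (p : T.Walk u v) (hp : p.IsPath) (w : V) (hw : w = p.getVert 1) :
    ((T.deleteEdges {s(u, w)}) ⊔ SimpleGraph.fromEdgeSet {s(u, v)}) ≤ G ∧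
    ((T.deleteEdges {s(u, w)}) ⊔ SimpleGraph.fromEdgeSet {s(u, v)}).IsTree ∧
    v ≠ w ∧
    ∀ x : V,
      Even ((((T.deleteEdges {s(u, w)}) ⊔
        SimpleGraph.fromEdgeSet {s(u, v)}).neighborSet x).ncard) ↔ (x = v ∨ x = w) := by
  classical
  rw [show fromEdgeSet {s(u, v)} = edge u v from rfl]
  have hn : ¬T.Adj u v := he
  have huw : T.Adj u w := hw ▸ p.adj_snd (Walk.not_nil_of_ne huv.ne)
  have hvw : v ≠ w := by rintro rfl; exact hn huw
  refine ⟨sup_le ((deleteEdges_le _).trans hTG) ((edge_le_iff G).mpr (.inr huv)),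
    hT.deleteEdges_sup_edge huw (hw ▸ hp.reachable_deleteEdges_snd), hvw, fun x ↦ ?_⟩
  -- `ncard` of an infinite set is `0`, so an odd degree forces a finite neighbourhood.
  have hfin : (T.neighborSet x).Finite := Set.finite_of_ncard_ne_zero (hodd x).pos.ne'
  have hdeg := ncard_neighborSet_deleteEdges_sup_edge_add huw hn huv.ne hfin
  obtain ⟨k, hk⟩ := hodd x
  rw [Nat.even_iff]
  split_ifs at hdeg <;> grind [huv.ne, huw.ne]

/-- If T is a spanning tree, with all degrees odd, of a connected non-tree graph G,
e = uv ∈ E(G) \ E(T), and w is the neighbour of u on the u–v path in T, then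
T − uw + uv is a spanning tree of G whose even-degree vertices are exactly v and w. -/
theorem stmt15 {V : Type*} [Fintype V] (G : SimpleGraph V)
    (hG : G.Connected) (hnt : ¬ G.IsTree)
    (T : SimpleGraph V) (hTG : T ≤ G) (hT : T.IsTree)
    (hodd : ∀ x : V, Odd ((T.neighborSet x).ncard))
    (u v : V) (huv : G.Adj u v) (he : s(u, v) ∉ T.edgeSet)
    (p : T.Walk u v) (hp : p.IsPath) (w : V) (hw : w = p.getVert 1) :
    ((T.deleteEdges {s(u, w)}) ⊔ SimpleGraph.fromEdgeSet {s(u, v)}) ≤ G ∧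
    ((T.deleteEdges {s(u, w)}) ⊔ SimpleGraph.fromEdgeSet {s(u, v)}).IsTree ∧
    v ≠ w ∧
    ∀ x : V,
      Even ((((T.deleteEdges {s(u, w)}) ⊔
        SimpleGraph.fromEdgeSet {s(u, v)}).neighborSet x).ncard) ↔ (x = v ∨ x = w) :=
  stmt15_general G T hTG hT hodd u v huv he p hp w hw
end
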